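/- Let k > 0, w > 0, θ ∈ ℝ with θ = -(ν - 1/2)·w for a natural number ν ≥ 1, and let n ∈ ℕ. Consider the two-state continuous-time Markov chain on {OFF, ON} with rate k·(1 + n·w) from OFF to ON and rate k·(1 + |θ|) from ON to OFF, with generator matrix Q_{OFF,OFF} = -k(1+n·w), Q_{OFF,ON} = k(1+n·w), Q_{ON,OFF} = k(1+|θ|), Q_{ON,ON} = -k(1+|θ|). Then the unique stationary distribution π (the probability vector with π·Q = 0) satisfies π_ON = (1 + n·w)/(2 + n·w + |θ|), and π_ON ≥ 1/2 if and only if n ≥ ν. -/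

import Mathlib

open Matrix

/-!
A two-state chain with rates `a` (OFF → ON) and `b` (ON → OFF) is stationary exactly when the
probability fluxes balance, `π OFF * a = π ON * b`; hence its stationary distribution is
`(b, a) / (a + b)`, and `π ON ≥ 1/2` iff `b ≤ a`. For `a = k (1 + n w)` and
`b = k (1 + |θ|) = k (1 + (ν - 1/2) w)` this says `ν - 1/2 ≤ n`, i.e. `ν ≤ n` since both are integers.
-/

namespace TwoStateChain

theorem vecMul_generator_eq_zero_iff {R : Type*} [CommRing R] (a b : R) (π : Fin 2 → R) :
    vecMul π !![-a, a; b, -b] = 0 ↔ π 0 * a = π 1 * b := by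
  rw [funext_iff, Fin.forall_fin_two]
  simp only [vecMul, dotProduct, Fin.sum_univ_two, of_apply, cons_val', cons_val_zero,
    cons_val_one, empty_val', cons_val_fin_one, Pi.zero_apply]
  constructor
  · rintro ⟨h0, -⟩
    linear_combination -h0
  · intro h
    exact ⟨by linear_combination -h, by linear_combination h⟩

theorem stationary_iff {K : Type*} [Field K] {a b : K} (hab : a + b ≠ 0) (π : Fin 2 → K) :
    (π 0 + π 1 = 1 ∧ vecMul π !![-a, a; b, -b] = 0) ↔ π = ![b / (a + b), a / (a + b)] := by
  rw [vecMul_generator_eq_zero_iff, funext_iff, Fin.forall_fin_two]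
  simp only [cons_val_zero, cons_val_one, eq_div_iff hab]
  constructor
  · rintro ⟨hsum, hflux⟩
    exact ⟨by linear_combination b * hsum + hflux, by linear_combination a * hsum - hflux⟩
  · rintro ⟨h0, h1⟩
    refine ⟨mul_right_cancel₀ hab ?_, ?_⟩
    · linear_combination h0 + h1
    · apply mul_left_cancel₀ hab
      linear_combination a * h0 - b * h1

theorem existsUnique_stationary {K : Type*} [Field K] [LinearOrder K] [IsStrictOrderedRing K]
    {a b : K} (ha : 0 ≤ a) (hb : 0 ≤ b) (hab : 0 < a + b) :
    ∃! π : Fin 2 → K, (∀ s, 0 ≤ π s) ∧ π 0 + π 1 = 1 ∧ vecMul π !![-a, a; b, -b] = 0 := by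
  refine ⟨![b / (a + b), a / (a + b)], ⟨?_, (stationary_iff hab.ne' _).2 rfl⟩, ?_⟩
  · rw [Fin.forall_fin_two]
    exact ⟨div_nonneg hb hab.le, div_nonneg ha hab.le⟩
  · rintro π ⟨-, hstat⟩
    exact (stationary_iff hab.ne' π).1 hstat

end TwoStateChain

theorem half_le_div_add_iff {K : Type*} [Field K] [LinearOrder K] [IsStrictOrderedRing K]
    {a b : K} (hab : 0 < a + b) : 1 / 2 ≤ a / (a + b) ↔ b ≤ a := by
  rw [le_div_iff₀ hab]
  constructor <;> intro h <;> linarith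

theorem Nat.cast_sub_half_le_cast_iff {ν n : ℕ} : (ν : ℝ) - 1 / 2 ≤ n ↔ ν ≤ n := by
  constructor
  · intro h
    by_contra! hlt
    have : (n : ℝ) + 1 ≤ ν := by exact_mod_cast hlt
    linarith
  · intro h
    have : (ν : ℝ) ≤ n := by exact_mod_cast h
    linarith

/-- Theorem 2 of the paper together with its proof: the two-state
CTMC on {OFF, ON} (state 0 = OFF, state 1 = ON) with activation rate k·(1+n·w)
and deactivation rate k·(1+|θ|), where θ = -(ν - 1/2)·w, has a unique stationary
distribution π, and this stationary distribution satisfies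
π_ON = (1 + n·w)/(2 + n·w + |θ|) and π_ON ≥ 1/2 iff n ≥ ν. -/
theorem taylor_crn_stationary_map (k w θ : ℝ) (hk : 0 < k) (hw : 0 < w)
    (ν : ℕ) (hν : 1 ≤ ν) (hθ : θ = -((ν : ℝ) - 1/2) * w) (n : ℕ)
    (Q : Matrix (Fin 2) (Fin 2) ℝ)
    (hQ : Q = !![-(k * (1 + (n : ℝ) * w)), k * (1 + (n : ℝ) * w);
                 k * (1 + |θ|), -(k * (1 + |θ|))]) :
    (∃! π : Fin 2 → ℝ, (∀ s, 0 ≤ π s) ∧ π 0 + π 1 = 1 ∧ Matrix.vecMul π Q = 0) ∧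
    (∀ π : Fin 2 → ℝ, (∀ s, 0 ≤ π s) → π 0 + π 1 = 1 → Matrix.vecMul π Q = 0 →
      π 1 = (1 + (n : ℝ) * w) / (2 + (n : ℝ) * w + |θ|) ∧
      (π 1 ≥ 1/2 ↔ ν ≤ n)) := by
  have habs : |θ| = ((ν : ℝ) - 1 / 2) * w := by
    have : (1 : ℝ) ≤ ν := by exact_mod_cast hν
    rw [hθ, neg_mul, abs_neg, abs_of_nonneg (by nlinarith)]
  set a := k * (1 + (n : ℝ) * w)
  set b := k * (1 + |θ|)
  have hab : 0 < a + b := by positivity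
  have hπ1 : a / (a + b) = (1 + (n : ℝ) * w) / (2 + (n : ℝ) * w + |θ|) := by
    rw [← mul_add, mul_div_mul_left _ _ hk.ne']
    congr 1; ring
  subst hQ
  refine ⟨TwoStateChain.existsUnique_stationary (by positivity) (by positivity) hab,
    fun π _ hsum hstat => ?_⟩
  obtain rfl := (TwoStateChain.stationary_iff hab.ne' π).1 ⟨hsum, hstat⟩
  refine ⟨hπ1, ?_⟩
  rw [cons_val_one, cons_val_fin_one, ge_iff_le, half_le_div_add_iff hab, mul_le_mul_iff_right₀ hk,
    add_le_add_iff_left, habs, mul_le_mul_iff_left₀ hw, Nat.cast_sub_half_le_cast_iff]
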